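/- arXiv:2302.03989 — 2 statements merged into one kernel-verified Lean document; each statement's English description precedes it below -/
import Mathlib

section
/- Let (G,E) be a contracting self-similar groupoid action on a finite directed graph E with no sinks and no sources, with limit space J and induced shift σ̃ : J → J. Let J_∞ = lim←(J, σ̃) = { (z_n)_{n≥1} ∈ J^ℕ : σ̃(z_{n+1}) = z_n for all n } with the subspace topology from the product, and let σ̃_∞ : J_∞ → J_∞ be the homeomorphism σ̃_∞(z₁, z₂, …) = (σ̃(z₁), z₁, z₂, …). Let S = E^ℤ/∼ be the limit solenoid, the quotient of the bi-infinite path space by asymptotic equivalence. Then there is a homeomorphism θ : S → J_∞ with θ([x]) = ([x(-∞,-1)], [x(-∞,0)], [x(-∞,1)], …) for all x ∈ E^ℤ, where x(-∞,n) ∈ E^{-∞} denotes the left-infinite path …x_{n-1}x_n; moreover θ([τ(x)]) = σ̃_∞(θ([x])) for all x ∈ E^ℤ, where τ is the translation (τ(x))_n = x_{n-1}. -/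
/-!
Self-similar groupoid actions on finite directed graphs, following
Brownlowe–Buss–Gonçalves–Hume–Sims–Whittaker,
"KK-duality for self-similar groupoid actions on graphs".

A directed graph is given by a vertex type `V`, an edge type `E` and
range/source maps `rE sE : E → V`.  A finite path is modelled as a list of
edges together with a base vertex (its range): the list `[e₁, …, eₙ]` is the
path `e₁ … eₙ` read from left to right, so consecutive edges satisfy
`sE eᵢ = rE eᵢ₊₁`.  The groupoid of a self-similar action, its partial
multiplication, the action on finite paths and the restriction maps are
modelled as total functions whose values are only constrained (by the axioms
of the structure `SSA`) on their natural domains.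
-/

universe u

namespace SSG

variable {V E : Type u}

/-- `l` is a trail: the source of each edge is the range of the next. -/
def IsTrail (rE sE : E → V) (l : List E) : Prop :=
  List.Chain' (fun e f => sE e = rE f) l

/-- `FromV rE sE v l` : `l` is a finite path whose range (leftmost vertex) is `v`. -/
def FromV (rE sE : E → V) (v : V) (l : List E) : Prop :=
  IsTrail rE sE l ∧ ∀ e, l.head? = some e → rE e = v

/-- The source (rightmost vertex) of the finite path `l` with range `v`. -/
def trailSrc (sE : E → V) (v : V) (l : List E) : V :=
  l.getLast?.elim v sE

/-- A (faithful) self-similar groupoid action `(G, E)` on the directed graph with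
vertices `V`, edges `E`, range map `rE` and source map `sE`.  Here `d`/`c` are
the domain/codomain maps of the groupoid `G` (its units are `unit v` for
`v : V`), `mul h g` is the composite `h ∘ g` (junk unless `d h = c g`),
`act g l` is `g · l` for finite paths `l` with range `d g` (junk otherwise)
and `res g l` is the restriction `g|_l` (junk otherwise). -/
structure SSA (V E : Type u) (rE sE : E → V) : Type (u + 1) where
  G : Type u
  d : G → V
  c : G → V
  mul : G → G → G
  inv : G → G
  unit : V → G
  act : G → List E → List E
  res : G → List E → G
  d_unit : ∀ v, d (unit v) = v
  c_unit : ∀ v, c (unit v) = v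
  d_mul : ∀ g h, d h = c g → d (mul h g) = d g
  c_mul : ∀ g h, d h = c g → c (mul h g) = c h
  mul_assoc : ∀ g h k, d h = c g → d k = c h → mul k (mul h g) = mul (mul k h) g
  unit_mul : ∀ g, mul (unit (c g)) g = g
  mul_unit : ∀ g, mul g (unit (d g)) = g
  d_inv : ∀ g, d (inv g) = c g
  c_inv : ∀ g, c (inv g) = d g
  inv_mul : ∀ g, mul (inv g) g = unit (d g)
  mul_inv : ∀ g, mul g (inv g) = unit (c g)
  act_fromV : ∀ g l, FromV rE sE (d g) l → FromV rE sE (c g) (act g l)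
  act_length : ∀ g l, FromV rE sE (d g) l → (act g l).length = l.length
  act_unit : ∀ v l, FromV rE sE v l → act (unit v) l = l
  act_mul : ∀ g h l, d h = c g → FromV rE sE (d g) l →
    act (mul h g) l = act h (act g l)
  faithful : ∀ g h, d g = d h → c g = c h →
    (∀ l, FromV rE sE (d g) l → act g l = act h l) → g = h
  res_nil : ∀ g, res g [] = g
  d_res : ∀ g l, FromV rE sE (d g) l → d (res g l) = trailSrc sE (d g) l
  c_res : ∀ g l, FromV rE sE (d g) l → c (res g l) = trailSrc sE (c g) (act g l)
  res_append : ∀ g l m, FromV rE sE (d g) l →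
    FromV rE sE (trailSrc sE (d g) l) m → res g (l ++ m) = res (res g l) m
  act_append : ∀ g l m, FromV rE sE (d g) l →
    FromV rE sE (trailSrc sE (d g) l) m →
    act g (l ++ m) = act g l ++ act (res g l) m

variable {rE sE : E → V}

/-- `F` is a contracting core for the self-similar groupoid action `A`. -/
def SSA.IsCore (A : SSA V E rE sE) (F : Set A.G) : Prop :=
  F.Finite ∧ ∀ g : A.G, ∃ n : ℕ, ∀ l : List E,
    FromV rE sE (A.d g) l → l.length = n → A.res g l ∈ F

/-- The action is contracting if it admits a contracting core. -/
def SSA.Contracting (A : SSA V E rE sE) : Prop :=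
  ∃ F : Set A.G, A.IsCore F

/-- The nucleus: the intersection of all contracting cores. -/
def SSA.nucleus (A : SSA V E rE sE) : Set A.G :=
  ⋂₀ {F : Set A.G | A.IsCore F}

/-- The action is recurrent. -/
def SSA.Recurrent (A : SSA V E rE sE) : Prop :=
  ∀ e f : E, ∀ h : A.G, A.d h = sE e → A.c h = sE f →
    ∃ g : A.G, A.d g = rE e ∧ A.act g [e] = [f] ∧ A.res g [e] = h

/-- The action is level-transitive: any two paths of the same length lie in
one orbit. -/
def SSA.LevelTransitive (A : SSA V E rE sE) : Prop :=
  ∀ (v w : V) (l m : List E), FromV rE sE v l → FromV rE sE w m →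
    l.length = m.length → ∃ g : A.G, A.d g = v ∧ A.c g = w ∧ A.act g l = m

/-- Every element of the groupoid is a finite composable product of
elements of `H`. -/
def SSA.GeneratedBy (A : SSA V E rE sE) (H : Set A.G) : Prop :=
  ∀ g : A.G, ∃ (h : A.G) (t : List A.G), h ∈ H ∧ (∀ k ∈ t, k ∈ H) ∧
    List.Chain' (fun a b => A.d a = A.c b) (h :: t) ∧ t.foldl A.mul h = g

/-- The groupoid of the action is finitely generated. -/
def SSA.FinitelyGenerated (A : SSA V E rE sE) : Prop :=
  ∃ H : Set A.G, H.Finite ∧ A.GeneratedBy H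

/-- The graph has no sources: every vertex receives an edge. -/
def NoSources (rE : E → V) : Prop := ∀ v : V, ∃ e : E, rE e = v

/-- The graph has no sinks: every vertex emits an edge. -/
def NoSinks (sE : E → V) : Prop := ∀ v : V, ∃ e : E, sE e = v

/-- The graph is strongly connected: it has an edge, and any ordered pair of
vertices is joined by a finite path. -/
def StronglyConnected (rE sE : E → V) : Prop :=
  Nonempty E ∧ ∀ v w : V, ∃ l : List E, FromV rE sE v l ∧ trailSrc sE v l = w

/-- Right-infinite paths `y₁ y₂ y₃ …` (here `y k` is the edge `y_{k+1}`). -/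
def RightPath (rE sE : E → V) : Type u :=
  {y : ℕ → E // ∀ k, sE (y k) = rE (y (k + 1))}

/-- The initial segment `y₁ … yₙ` of a right-infinite path. -/
def RightPath.trunc (y : RightPath rE sE) (n : ℕ) : List E :=
  (List.range n).map y.1

/-- The action is regular: whenever `g` fixes a right-infinite path `y`
(equivalently, all its initial segments), `g` acts trivially on some cylinder
neighbourhood of `y`: some initial segment `μ` of `y` satisfies `g·μ = μ` and
`g|_μ = s(μ)`. -/
def SSA.Regular (A : SSA V E rE sE) : Prop :=
  ∀ (g : A.G) (y : RightPath rE sE), A.d g = rE (y.1 0) →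
    (∀ n : ℕ, A.act g (y.trunc n) = y.trunc n) →
    ∃ n : ℕ, A.act g (y.trunc n) = y.trunc n ∧
      A.res g (y.trunc n) = A.unit (trailSrc sE (A.d g) (y.trunc n))

/-- Left-infinite paths `… x₋₂ x₋₁` (here `x k` is the edge `x_{-(k+1)}`). -/
def LeftPath (rE sE : E → V) : Type u :=
  {x : ℕ → E // ∀ k, sE (x (k + 1)) = rE (x k)}

instance [TopologicalSpace E] : TopologicalSpace (LeftPath rE sE) :=
  inferInstanceAs (TopologicalSpace {x : ℕ → E // ∀ k, sE (x (k + 1)) = rE (x k)})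

/-- The finite path `x₋ₘ … x₋₁`. -/
def LeftPath.trunc (x : LeftPath rE sE) (m : ℕ) : List E :=
  ((List.range m).reverse).map x.1

/-- The shift on left-infinite paths, deleting the rightmost edge. -/
def LeftPath.shift (x : LeftPath rE sE) : LeftPath rE sE :=
  ⟨fun k => x.1 (k + 1), fun k => x.2 (k + 1)⟩

/-- Asymptotic equivalence of left-infinite paths: some sequence `(gₙ)` in the
groupoid with finitely many distinct values satisfies
`gₙ · (xₙ … x₋₁) = yₙ … y₋₁` for all `n < 0`. -/
def SSA.AsympEq (A : SSA V E rE sE) (x y : LeftPath rE sE) : Prop :=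
  ∃ g : ℕ → A.G, (Set.range g).Finite ∧
    (∀ m : ℕ, A.d (g m) = rE (x.1 m)) ∧
    (∀ m : ℕ, A.act (g m) (x.trunc (m + 1)) = y.trunc (m + 1))

/-- The cylinder set `Z(l]` of left-infinite paths ending in `l`. -/
def cylL (rE sE : E → V) (l : List E) : Set (LeftPath rE sE) :=
  {x : LeftPath rE sE | x.trunc l.length = l}

/-- The basic subset `U_l` of the limit space attached to a finite path `l`
with range `v`. -/
def SSA.limitU (A : SSA V E rE sE) (v : V) (l : List E) :
    Set (Quot A.AsympEq) :=
  {z : Quot A.AsympEq | ∀ x : LeftPath rE sE, Quot.mk A.AsympEq x = z →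
    ∃ g ∈ A.nucleus, A.d g = v ∧ x ∈ cylL rE sE (A.act g l)}

/-- Bi-infinite paths `… x₋₁ x₀ x₁ …`. -/
def BiPath (rE sE : E → V) : Type u :=
  {x : ℤ → E // ∀ k : ℤ, sE (x k) = rE (x (k + 1))}

instance [TopologicalSpace E] : TopologicalSpace (BiPath rE sE) :=
  inferInstanceAs (TopologicalSpace {x : ℤ → E // ∀ k : ℤ, sE (x k) = rE (x (k + 1))})

/-- The finite segment `xₙ x_{n+1} … x_{n+m-1}` of a bi-infinite path. -/
def BiPath.seg (x : BiPath rE sE) (n : ℤ) (m : ℕ) : List E :=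
  (List.range m).map fun i => x.1 (n + i)

/-- Asymptotic equivalence of bi-infinite paths: some sequence `(gₙ)_{n ∈ ℤ}`
with finitely many distinct values satisfies
`gₙ · (xₙ x_{n+1} …) = yₙ y_{n+1} …` for all `n`. -/
def SSA.AsympEqZ (A : SSA V E rE sE) (x y : BiPath rE sE) : Prop :=
  ∃ g : ℤ → A.G, (Set.range g).Finite ∧
    (∀ n : ℤ, A.d (g n) = rE (x.1 n)) ∧
    (∀ (n : ℤ) (m : ℕ), A.act (g n) (x.seg n m) = y.seg n m)

/-- The left-infinite path `x(-∞, n) = … x_{n-1} xₙ` of a bi-infinite path. -/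
def BiPath.tail (x : BiPath rE sE) (n : ℤ) : LeftPath rE sE :=
  ⟨fun k => x.1 (n - k), by
    intro k
    have h := x.2 (n - ((k : ℤ) + 1))
    have h2 : n - ((k : ℤ) + 1) + 1 = n - (k : ℤ) := by ring
    have h3 : (n - ((k + 1 : ℕ) : ℤ)) = n - ((k : ℤ) + 1) := by push_cast; ring
    show sE (x.1 (n - ((k + 1 : ℕ) : ℤ))) = rE (x.1 (n - (k : ℤ)))
    rw [h3, ← h2]
    exact h⟩

/-- The translation `τ` on bi-infinite paths, `(τ x)ₙ = x_{n-1}`. -/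
def BiPath.translate (x : BiPath rE sE) : BiPath rE sE :=
  ⟨fun m => x.1 (m - 1), by
    intro k
    have h := x.2 (k - 1)
    have h2 : (k - 1 + 1 : ℤ) = k + 1 - 1 := by ring
    rw [h2] at h
    exact h⟩

/-- The shift homeomorphism `σ̃_∞` on the inverse limit `lim← (J, T)`. -/
def solShift {J : Type*} (T : J → J)
    (z : {z : ℕ → J // ∀ n, T (z (n + 1)) = z n}) :
    {z : ℕ → J // ∀ n, T (z (n + 1)) = z n} :=
  ⟨fun n => match n with
    | 0 => T (z.1 0)
    | m + 1 => z.1 m,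
   fun n => match n with
    | 0 => rfl
    | m + 1 => z.2 m⟩

/-- The distance function of a bundled metric space. -/
def mdist {Y : Type*} (m : MetricSpace Y) (a b : Y) : ℝ := by
  letI := m; exact dist a b

/-- The open ball of a bundled metric space. -/
def mball {Y : Type*} (m : MetricSpace Y) (a : Y) (r : ℝ) : Set Y := by
  letI := m; exact Metric.ball a r

/-- The topology induced by a bundled metric space. -/
def mtop {Y : Type*} (m : MetricSpace Y) : TopologicalSpace Y := by
  letI := m; exact inferInstance

/-!
Contraction provides a finite set `𝒩` of groupoid elements containing all sufficiently deep
restrictions of every element, so asymptotic equivalence of left-infinite paths is witnessed level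
by level inside `𝒩`. Hence the relation is closed and the limit space `J` is Hausdorff; and a
compactness argument in `𝒩` assembles witnesses for all tails `x(-∞, N)`, `y(-∞, N)` of two
bi-infinite paths into a witness for `x ∼ y`. So `x ↦ ([x(-∞, n - 1)])ₙ` induces a continuous
injection of the compact solenoid into the Hausdorff inverse limit. It is onto because, with no
sources, every left-infinite path extends to a bi-infinite one, and the paths realising the
`n`-th coordinate of a given point form a decreasing sequence of nonempty compact sets.
Translation turns into the shift because the tails of `τ x` are those of `x`, moved by one.
-/

section Paths

theorem fromV_nil (v : V) : FromV rE sE v [] :=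
  ⟨List.isChain_nil, fun _ h => by simp at h⟩

theorem fromV_cons_iff {v : V} {e : E} {l : List E} :
    FromV rE sE v (e :: l) ↔ rE e = v ∧ FromV rE sE (sE e) l := by
  constructor
  · rintro ⟨hchain, hhead⟩
    refine ⟨hhead e rfl, hchain.tail, fun f hf => ?_⟩
    cases l with
    | nil => simp at hf
    | cons f' t =>
      obtain rfl : f' = f := Option.some.inj hf
      exact (List.isChain_cons_cons.mp hchain).1.symm
  · rintro ⟨rfl, hchain, hhead⟩
    refine ⟨List.isChain_cons.mpr ⟨fun f hf => (hhead f hf).symm, hchain⟩, ?_⟩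
    rintro f ⟨⟩
    rfl

theorem trailSrc_cons (v : V) (e : E) (l : List E) :
    trailSrc sE v (e :: l) = trailSrc sE (sE e) l := by
  cases l <;> simp [trailSrc, List.getLast?_cons]

theorem FromV.of_append {v : V} {l₁ l₂ : List E} (h : FromV rE sE v (l₁ ++ l₂)) :
    FromV rE sE v l₁ ∧ FromV rE sE (trailSrc sE v l₁) l₂ := by
  induction l₁ generalizing v with
  | nil => exact ⟨fromV_nil v, h⟩
  | cons e t ih =>
    obtain ⟨he, ht⟩ := fromV_cons_iff.mp h
    obtain ⟨h₁, h₂⟩ := ih ht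
    exact ⟨fromV_cons_iff.mpr ⟨he, h₁⟩, by rwa [trailSrc_cons]⟩

theorem FromV.take {v : V} {l : List E} (h : FromV rE sE v l) (n : ℕ) :
    FromV rE sE v (l.take n) :=
  ((List.take_append_drop n l).symm ▸ h).of_append.1

theorem LeftPath.trunc_succ (x : LeftPath rE sE) (m : ℕ) :
    x.trunc (m + 1) = x.1 m :: x.trunc m := by
  simp [LeftPath.trunc, List.range_succ]

theorem LeftPath.length_trunc (x : LeftPath rE sE) (m : ℕ) : (x.trunc m).length = m := by
  simp [LeftPath.trunc]

theorem LeftPath.fromV_trunc (x : LeftPath rE sE) (m : ℕ) :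
    FromV rE sE (rE (x.1 m)) (x.trunc (m + 1)) := by
  induction m with
  | zero => exact fromV_cons_iff.mpr ⟨rfl, fromV_nil _⟩
  | succ m ih => exact x.trunc_succ (m + 1) ▸ fromV_cons_iff.mpr ⟨rfl, x.2 m ▸ ih⟩

theorem LeftPath.fromV_trunc_iff (x : LeftPath rE sE) {m : ℕ} {v : V} :
    FromV rE sE v (x.trunc (m + 1)) ↔ v = rE (x.1 m) :=
  ⟨fun h => (h.2 _ (by rw [x.trunc_succ]; rfl)).symm, fun h => h ▸ x.fromV_trunc m⟩

theorem LeftPath.trunc_succ_eq_shift_append (x : LeftPath rE sE) (m : ℕ) :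
    x.trunc (m + 1) = x.shift.trunc m ++ [x.1 0] := by
  induction m with
  | zero => rfl
  | succ m ih => rw [x.trunc_succ, ih, x.shift.trunc_succ]; rfl

theorem LeftPath.exists_trunc_add (x : LeftPath rE sE) (m K : ℕ) :
    ∃ l : List E, l.length = K ∧ x.trunc (m + K) = l ++ x.trunc m := by
  induction K with
  | zero => exact ⟨[], rfl, rfl⟩
  | succ K ih =>
    obtain ⟨l, hl, h⟩ := ih
    exact ⟨x.1 (m + K) :: l, by simp [hl], by rw [← add_assoc, x.trunc_succ, h]; rfl⟩

theorem BiPath.seg_eq (x : BiPath rE sE) (n : ℤ) (m : ℕ) :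
    x.seg n m = (List.range m).map fun i : ℕ => x.1 (n + i) := by
  simp only [BiPath.seg, bind_pure_comp, List.map_eq_map, List.map_map]
  rfl

theorem BiPath.length_seg (x : BiPath rE sE) (n : ℤ) (m : ℕ) : (x.seg n m).length = m := by
  simp [x.seg_eq]

theorem BiPath.seg_succ (x : BiPath rE sE) (n : ℤ) (m : ℕ) :
    x.seg n (m + 1) = x.1 n :: x.seg (n + 1) m := by
  simp only [seg_eq, List.range_succ_eq_map, List.map_cons, List.map_map, Nat.cast_zero,
    add_zero, Function.comp_def, Nat.cast_succ]
  exact congrArg _ (List.map_congr_left fun i _ => congrArg x.1 (by ring))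

theorem BiPath.seg_add (x : BiPath rE sE) (n : ℤ) (a b : ℕ) :
    x.seg n (a + b) = x.seg n a ++ x.seg (n + a) b := by
  simp only [seg_eq, List.range_add, List.map_append, List.map_map, Function.comp_def,
    Nat.cast_add, add_assoc]

theorem BiPath.fromV_seg (x : BiPath rE sE) (n : ℤ) (m : ℕ) :
    FromV rE sE (rE (x.1 n)) (x.seg n m) := by
  induction m generalizing n with
  | zero => simpa [seg_eq] using fromV_nil _
  | succ m ih => exact x.seg_succ n m ▸ fromV_cons_iff.mpr ⟨rfl, x.2 n ▸ ih (n + 1)⟩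

theorem BiPath.tail_apply (x : BiPath rE sE) (N : ℤ) (k : ℕ) : (x.tail N).1 k = x.1 (N - k) :=
  rfl

theorem BiPath.trunc_tail (x : BiPath rE sE) (N : ℤ) (m : ℕ) :
    (x.tail N).trunc m = x.seg (N + 1 - m) m := by
  rw [seg_eq]
  refine List.ext_getElem (by simp [LeftPath.length_trunc]) fun i hi _ => ?_
  simp only [LeftPath.trunc, List.getElem_map, List.getElem_reverse, List.getElem_range,
    List.length_range, tail_apply]
  simp only [LeftPath.length_trunc] at hi
  exact congrArg x.1 (by omega)

theorem BiPath.shift_tail (x : BiPath rE sE) (N : ℤ) : (x.tail N).shift = x.tail (N - 1) :=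
  Subtype.ext <| funext fun k => congrArg x.1 (by push_cast; ring)

theorem BiPath.tail_translate (x : BiPath rE sE) (N : ℤ) :
    x.translate.tail N = x.tail (N - 1) :=
  Subtype.ext <| funext fun k => congrArg x.1 (by ring)

end Paths

namespace SSA

variable (A : SSA V E rE sE)

theorem fromV_drop_res_take {g : A.G} {l : List E} (h : FromV rE sE (A.d g) l) (n : ℕ) :
    FromV rE sE (A.d (A.res g (l.take n))) (l.drop n) := by
  rw [A.d_res _ _ (h.take n)]
  exact ((List.take_append_drop n l).symm ▸ h).of_append.2

theorem res_res_take_drop {g : A.G} {l : List E} (h : FromV rE sE (A.d g) l) (n : ℕ) :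
    A.res (A.res g (l.take n)) (l.drop n) = A.res g l := by
  have hdrop := A.fromV_drop_res_take h n
  rw [A.d_res _ _ (h.take n)] at hdrop
  rw [← A.res_append _ _ _ (h.take n) hdrop, List.take_append_drop]

theorem act_eq_of_act_append_eq {g : A.G} {l₁ l₂ r₁ r₂ : List E}
    (h : FromV rE sE (A.d g) (l₁ ++ l₂)) (hlen : r₁.length = l₁.length)
    (hact : A.act g (l₁ ++ l₂) = r₁ ++ r₂) :
    A.act g l₁ = r₁ ∧ A.act (A.res g l₁) l₂ = r₂ := by
  obtain ⟨h₁, h₂⟩ := h.of_append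
  rw [A.act_append g l₁ l₂ h₁ h₂] at hact
  exact List.append_inj hact (by rw [A.act_length g l₁ h₁, hlen])

def IsStrongCore (𝒩 : Set A.G) : Prop :=
  𝒩.Finite ∧ ∀ g : A.G, ∃ N : ℕ, ∀ l : List E,
    FromV rE sE (A.d g) l → N ≤ l.length → A.res g l ∈ 𝒩

/-- If `F` is a core and `K` bounds the depths at which the elements of `F` and their one-edge
restrictions restrict back into `F`, then the restrictions of `F` along paths of length `≤ K + 1`
form a strong core: a longer path splits into one edge, a segment leading back into `F`, and a
shorter rest. -/
theorem Contracting.exists_isStrongCore [Finite E] {A : SSA V E rE sE} (hA : A.Contracting) :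
    ∃ 𝒩, A.IsStrongCore 𝒩 := by
  obtain ⟨F, hFfin, hF⟩ := hA
  choose n hn using hF
  let resBelow (K : ℕ) : Set A.G :=
    (fun p : A.G × List E => A.res p.1 p.2) '' (F ×ˢ {l | l.length ≤ K})
  have hfin (K : ℕ) : (resBelow K).Finite :=
    (hFfin.prod (List.finite_length_le E K)).image _
  obtain ⟨K, hK⟩ := ((hfin 1).image n).bddAbove
  have hres : ∀ L, ∀ f ∈ F, ∀ l, FromV rE sE (A.d f) l → l.length = L →
      A.res f l ∈ resBelow (K + 1) := by
    intro L
    induction L using Nat.strong_induction_on with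
    | _ L ih =>
      intro f hf l hl hL
      by_cases hLK : L ≤ K + 1
      · exact ⟨(f, l), ⟨hf, show l.length ≤ K + 1 by omega⟩, rfl⟩
      set h := A.res f (l.take 1)
      have hnh : n h ≤ K := hK ⟨h, ⟨(f, l.take 1), ⟨hf, by simp⟩, rfl⟩, rfl⟩
      have hl₁ := A.fromV_drop_res_take hl 1
      rw [← A.res_res_take_drop hl 1, ← A.res_res_take_drop hl₁ (n h)]
      refine ih _ ?_ _ (hn h _ (hl₁.take _) ?_) _ (A.fromV_drop_res_take hl₁ _) rfl
      all_goals simp only [List.length_drop, List.length_take]; omega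
  refine ⟨_, hfin (K + 1), fun g => ⟨n g, fun l hl hlen => ?_⟩⟩
  rw [← A.res_res_take_drop hl (n g)]
  exact hres _ _ (hn g _ (hl.take _) (List.length_take_of_le hlen)) _
    (A.fromV_drop_res_take hl _) rfl

theorem c_eq_of_act_trunc {g : A.G} {x y : LeftPath rE sE} {m : ℕ}
    (hd : A.d g = rE (x.1 m)) (hact : A.act g (x.trunc (m + 1)) = y.trunc (m + 1)) :
    A.c g = rE (y.1 m) :=
  y.fromV_trunc_iff.mp (hact ▸ A.act_fromV g _ (x.fromV_trunc_iff.mpr hd))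

theorem act_inv_act {g : A.G} {l : List E} (h : FromV rE sE (A.d g) l) :
    A.act (A.inv g) (A.act g l) = l := by
  rw [← A.act_mul g (A.inv g) l (A.d_inv g) h, A.inv_mul, A.act_unit _ l h]

theorem asympEq_refl [Finite E] (x : LeftPath rE sE) : A.AsympEq x x :=
  ⟨fun m => A.unit (rE (x.1 m)),
    (Set.finite_range (A.unit ∘ rE)).subset (Set.range_subset_iff.mpr fun m => ⟨x.1 m, rfl⟩),
    fun _ => A.d_unit _, fun m => A.act_unit _ _ (x.fromV_trunc m)⟩

theorem AsympEq.symm {A : SSA V E rE sE} {x y : LeftPath rE sE} (h : A.AsympEq x y) :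
    A.AsympEq y x := by
  obtain ⟨g, hfin, hd, hact⟩ := h
  refine ⟨fun m => A.inv (g m), (hfin.image A.inv).subset ?_, fun m => ?_, fun m => ?_⟩
  · rintro - ⟨m, rfl⟩
    exact ⟨g m, ⟨m, rfl⟩, rfl⟩
  · rw [A.d_inv]
    exact A.c_eq_of_act_trunc (hd m) (hact m)
  · rw [← hact m]
    exact A.act_inv_act (x.fromV_trunc_iff.mpr (hd m))

theorem AsympEq.trans {A : SSA V E rE sE} {x y z : LeftPath rE sE} (h₁ : A.AsympEq x y)
    (h₂ : A.AsympEq y z) : A.AsympEq x z := by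
  obtain ⟨g, hgfin, hgd, hgact⟩ := h₁
  obtain ⟨h, hhfin, hhd, hhact⟩ := h₂
  have hcomp (m : ℕ) : A.d (h m) = A.c (g m) := by
    rw [hhd m, A.c_eq_of_act_trunc (hgd m) (hgact m)]
  refine ⟨fun m => A.mul (h m) (g m), (hhfin.image2 A.mul hgfin).subset ?_,
    fun m => (A.d_mul _ _ (hcomp m)).trans (hgd m), fun m => ?_⟩
  · rintro - ⟨m, rfl⟩
    exact Set.mem_image2_of_mem ⟨m, rfl⟩ ⟨m, rfl⟩
  · rw [A.act_mul _ _ _ (hcomp m) (x.fromV_trunc_iff.mpr (hgd m)), hgact m, hhact m]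

theorem asympEq_equivalence [Finite E] : Equivalence (A.AsympEq (rE := rE) (sE := sE)) :=
  ⟨A.asympEq_refl, AsympEq.symm, AsympEq.trans⟩

theorem mk_eq_mk_iff [Finite E] {x y : LeftPath rE sE} :
    Quot.mk A.AsympEq x = Quot.mk A.AsympEq y ↔ A.AsympEq x y :=
  Quot.eq.trans A.asympEq_equivalence.eqvGen_iff

theorem AsympEq.shift {A : SSA V E rE sE} {x y : LeftPath rE sE} (h : A.AsympEq x y) :
    A.AsympEq x.shift y.shift := by
  obtain ⟨g, hfin, hd, hact⟩ := h
  refine ⟨fun m => g (m + 1), hfin.subset (Set.range_comp_subset_range _ g), fun m => hd _,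
    fun m => ?_⟩
  have hx := x.trunc_succ_eq_shift_append (m + 1)
  have hxy := hact (m + 1)
  rw [hx, y.trunc_succ_eq_shift_append] at hxy
  exact (A.act_eq_of_act_append_eq (hx ▸ x.fromV_trunc_iff.mpr (hd _))
    (by rw [LeftPath.length_trunc, LeftPath.length_trunc]) hxy).1

variable {A} {𝒩 : Set A.G}

/-- Deep restrictions of the finitely many `gₘ` witnessing `x ∼ y` lie in `𝒩` and still
witness `x ∼ y` on the shorter truncations. -/
theorem AsympEq.exists_mem_core (h𝒩 : A.IsStrongCore 𝒩) {x y : LeftPath rE sE}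
    (h : A.AsympEq x y) (k : ℕ) :
    ∃ g ∈ 𝒩, A.d g = rE (x.1 k) ∧ A.act g (x.trunc (k + 1)) = y.trunc (k + 1) := by
  obtain ⟨g, hfin, hd, hact⟩ := h
  choose N hN using h𝒩.2
  obtain ⟨K, hK⟩ := (hfin.image N).bddAbove
  obtain ⟨l, hl, hx⟩ := x.exists_trunc_add (k + 1) K
  obtain ⟨l', hl', hy⟩ := y.exists_trunc_add (k + 1) K
  have hgx : FromV rE sE (A.d (g (k + K))) (l ++ x.trunc (k + 1)) := by
    rw [← hx, add_right_comm]
    exact x.fromV_trunc_iff.mpr (hd _)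
  have hgact := hact (k + K)
  rw [add_right_comm, hx, hy] at hgact
  refine ⟨A.res (g (k + K)) l, hN _ l hgx.of_append.1 (hl ▸ hK ⟨g (k + K), ⟨_, rfl⟩, rfl⟩), ?_,
    (A.act_eq_of_act_append_eq hgx (by rw [hl, hl']) hgact).2⟩
  rw [A.d_res _ _ hgx.of_append.1]
  exact x.fromV_trunc_iff.mp hgx.of_append.2

theorem asympEq_iff_forall_exists_mem (h𝒩 : A.IsStrongCore 𝒩) {x y : LeftPath rE sE} :
    A.AsympEq x y ↔ ∀ k : ℕ, ∃ g ∈ 𝒩, A.d g = rE (x.1 k) ∧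
      A.act g (x.trunc (k + 1)) = y.trunc (k + 1) := by
  refine ⟨fun h => h.exists_mem_core h𝒩, fun h => ?_⟩
  choose g hg hd hact using h
  exact ⟨g, h𝒩.1.subset (Set.range_subset_iff.mpr hg), hd, hact⟩

end SSA

section Topology

variable [TopologicalSpace E]

theorem isClosed_setOf_sE_eq_rE [DiscreteTopology E] {ι : Type*} (i j : ι) :
    IsClosed {x : ι → E | sE (x i) = rE (x j)} :=
  have : Continuous fun x : ι → E => (x i, x j) := (continuous_apply i).prodMk (continuous_apply j)
  (isClosed_discrete {p : E × E | sE p.1 = rE p.2}).preimage this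

instance [Finite E] [DiscreteTopology E] : CompactSpace (LeftPath rE sE) :=
  have : CompactSpace E := Finite.compactSpace
  have hcl : IsClosed {x : ℕ → E | ∀ k, sE (x (k + 1)) = rE (x k)} := by
    simpa only [Set.ofPred_forall] using isClosed_iInter fun k => isClosed_setOf_sE_eq_rE (k + 1) k
  isCompact_iff_compactSpace.mp hcl.isCompact

instance [Finite E] [DiscreteTopology E] : CompactSpace (BiPath rE sE) :=
  have : CompactSpace E := Finite.compactSpace
  have hcl : IsClosed {x : ℤ → E | ∀ k, sE (x k) = rE (x (k + 1))} := by
    simpa only [Set.ofPred_forall] using isClosed_iInter fun k => isClosed_setOf_sE_eq_rE k (k + 1)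
  isCompact_iff_compactSpace.mp hcl.isCompact

instance [T2Space E] : T2Space (LeftPath rE sE) :=
  inferInstanceAs (T2Space {x : ℕ → E // ∀ k, sE (x (k + 1)) = rE (x k)})

theorem BiPath.continuous_tail (N : ℤ) : Continuous fun x : BiPath rE sE => x.tail N := by
  apply Continuous.subtype_mk
  exact continuous_pi fun k => (continuous_apply (N - k)).comp continuous_subtype_val

theorem LeftPath.isLocallyConstant_trunc [DiscreteTopology E] (m : ℕ) :
    IsLocallyConstant fun x : LeftPath rE sE => x.trunc m := by
  have : (fun x : LeftPath rE sE => x.trunc m) =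
      (fun f : Fin m → E => ((List.finRange m).map f).reverse) ∘ fun x i => x.1 i := by
    funext x
    simp [LeftPath.trunc, ← List.map_coe_finRange_eq_range, List.map_reverse, List.map_map,
      Function.comp_def]
  rw [this]
  exact (IsLocallyConstant.of_discrete _).comp_continuous
    (continuous_pi fun i => (continuous_apply _).comp continuous_subtype_val)

theorem SSA.isClosed_setOf_asympEq [DiscreteTopology E] {A : SSA V E rE sE} {𝒩 : Set A.G}
    (h𝒩 : A.IsStrongCore 𝒩) :
    IsClosed {p : LeftPath rE sE × LeftPath rE sE | A.AsympEq p.1 p.2} := by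
  simp only [A.asympEq_iff_forall_exists_mem h𝒩, Set.ofPred_forall, ← LeftPath.fromV_trunc_iff]
  refine isClosed_iInter fun k => ?_
  have htrunc : IsLocallyConstant fun p : LeftPath rE sE × LeftPath rE sE =>
      (p.1.trunc (k + 1), p.2.trunc (k + 1)) :=
    ((LeftPath.isLocallyConstant_trunc _).comp_continuous continuous_fst).prodMk
      ((LeftPath.isLocallyConstant_trunc _).comp_continuous continuous_snd)
  exact ⟨htrunc {q | ¬∃ g ∈ 𝒩, FromV rE sE (A.d g) q.1 ∧ A.act g q.1 = q.2}⟩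

theorem t2Space_quot_of_isClosed {X : Type*} [TopologicalSpace X] [CompactSpace X] [T2Space X]
    {r : X → X → Prop} (hr : Equivalence r) (hcl : IsClosed {p : X × X | r p.1 p.2}) :
    T2Space (Quot r) := by
  have hmk (x y : X) : Quot.mk r x = Quot.mk r y ↔ r x y := Quot.eq.trans hr.eqvGen_iff
  have hfiber (x : X) : IsClosed {t | r t x} :=
    hcl.preimage (continuous_id.prodMk continuous_const)
  -- the saturation of a closed set `C` is the projection of the compact set `r ∩ (X × C)`
  have hclosed : IsClosedMap (Quot.mk r) := fun C hC => by
    rw [← isQuotientMap_quot_mk.isClosed_preimage]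
    convert isClosedMap_fst_of_compactSpace _ (hcl.inter (hC.preimage continuous_snd)) using 1
    ext x
    simp only [Set.mem_preimage, Set.mem_image, Set.mem_inter_iff, Set.mem_ofPred_eq, hmk,
      Prod.exists, exists_and_right, exists_eq_right]
    exact ⟨fun ⟨c, hc, hcx⟩ => ⟨c, hr.symm hcx, hc⟩, fun ⟨c, hxc, hc⟩ => ⟨c, hc, hr.symm hxc⟩⟩
  refine ⟨fun a b hab => ?_⟩
  induction a using Quot.ind with | mk x => ?_
  induction b using Quot.ind with | mk y => ?_
  obtain ⟨U, W, hU, hW, hxU, hyW, hUW⟩ := SeparatedNhds.of_isCompact_isCompact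
    (hfiber x).isCompact (hfiber y).isCompact
    (Set.disjoint_left.mpr fun t htx hty => hab ((hmk x y).mpr (hr.trans (hr.symm htx) hty)))
  refine ⟨(Quot.mk r '' Uᶜ)ᶜ, (Quot.mk r '' Wᶜ)ᶜ, (hclosed _ hU.isClosed_compl).isOpen_compl,
    (hclosed _ hW.isClosed_compl).isOpen_compl, ?_, ?_, ?_⟩
  · rintro ⟨t, ht, htx⟩
    exact ht (hxU ((hmk t x).mp htx))
  · rintro ⟨t, ht, hty⟩
    exact ht (hyW ((hmk t y).mp hty))
  · rw [Set.disjoint_compl_left_iff_subset]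
    rintro ⟨s⟩ hs
    exact ⟨s, fun hsU => hUW.le_bot ⟨hsU, not_not.mp fun hsW => hs ⟨s, hsW, rfl⟩⟩, rfl⟩

theorem SSA.t2Space_quot_asympEq [Finite E] [DiscreteTopology E] {A : SSA V E rE sE}
    {𝒩 : Set A.G} (h𝒩 : A.IsStrongCore 𝒩) : T2Space (Quot A.AsympEq) :=
  t2Space_quot_of_isClosed A.asympEq_equivalence (A.isClosed_setOf_asympEq h𝒩)

end Topology

theorem nonempty_iInter_of_antitone_of_finite {α : Type*} {C : ℕ → Set α} (hC : Antitone C)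
    (hfin : (C 0).Finite) (hne : ∀ m, (C m).Nonempty) : (⋂ m, C m).Nonempty :=
  letI : TopologicalSpace α := ⊥
  haveI : DiscreteTopology α := ⟨rfl⟩
  IsCompact.nonempty_iInter_of_sequence_nonempty_isCompact_isClosed C (fun m => hC m.le_succ) hne
    hfin.isCompact fun _ => isClosed_discrete _

namespace SSA

variable {A : SSA V E rE sE} {𝒩 : Set A.G}

theorem AsympEq.tail_of_le {x y : BiPath rE sE} {M N : ℤ}
    (h : A.AsympEq (x.tail N) (y.tail N)) (hMN : M ≤ N) : A.AsympEq (x.tail M) (y.tail M) := by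
  obtain ⟨k, rfl⟩ : ∃ k : ℕ, M = N - k := ⟨(N - M).toNat, by omega⟩
  induction k with
  | zero => simpa using h
  | succ k ih =>
    have := (ih (by omega)).shift
    rwa [x.shift_tail, y.shift_tail, sub_sub, ← Nat.cast_succ] at this

theorem AsympEqZ.tail {x y : BiPath rE sE} (h : A.AsympEqZ x y) (N : ℤ) :
    A.AsympEq (x.tail N) (y.tail N) := by
  obtain ⟨g, hfin, hd, hact⟩ := h
  refine ⟨fun m => g (N - m), hfin.subset (Set.range_comp_subset_range _ g), fun m => hd _,
    fun m => ?_⟩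
  rw [x.trunc_tail, y.trunc_tail, Nat.cast_succ, add_sub_add_right_eq_sub]
  exact hact _ _

/-- Each `gₙ` is found by a compactness argument in the finite set `𝒩`: the elements of `𝒩`
mapping `xₙ … x_{n+m-1}` to `yₙ … y_{n+m-1}` form a decreasing sequence of nonempty sets. -/
theorem asympEqZ_of_forall_asympEq_tail (h𝒩 : A.IsStrongCore 𝒩) {x y : BiPath rE sE}
    (h : ∀ N : ℤ, A.AsympEq (x.tail N) (y.tail N)) : A.AsympEqZ x y := by
  have key (n : ℤ) : ∃ g ∈ 𝒩, A.d g = rE (x.1 n) ∧ ∀ m, A.act g (x.seg n m) = y.seg n m := by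
    let C (m : ℕ) : Set A.G := {g ∈ 𝒩 | A.d g = rE (x.1 n) ∧ A.act g (x.seg n m) = y.seg n m}
    have hC : Antitone C := antitone_nat_of_succ_le fun m g ⟨hg, hd, hact⟩ => by
      rw [x.seg_add, y.seg_add] at hact
      refine ⟨hg, hd, (A.act_eq_of_act_append_eq ?_ (by simp [BiPath.length_seg]) hact).1⟩
      exact x.seg_add n m 1 ▸ hd ▸ x.fromV_seg n (m + 1)
    have hne (m : ℕ) : (C (m + 1)).Nonempty := by
      obtain ⟨g, hg, hd, hact⟩ := (h (n + m)).exists_mem_core h𝒩 m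
      rw [x.trunc_tail, y.trunc_tail, Nat.cast_succ, add_sub_add_right_eq_sub,
        add_sub_cancel_right] at hact
      rw [BiPath.tail_apply, add_sub_cancel_right] at hd
      exact ⟨g, hg, hd, hact⟩
    obtain ⟨g, hg⟩ := nonempty_iInter_of_antitone_of_finite hC (h𝒩.1.subset fun _ hg => hg.1)
      fun m => (hne m).mono (hC m.le_succ)
    rw [Set.mem_iInter] at hg
    exact ⟨g, (hg 0).1, (hg 0).2.1, fun m => (hg m).2.2⟩
  choose g hg hd hact using key
  exact ⟨g, h𝒩.1.subset (Set.range_subset_iff.mpr hg), hd, hact⟩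

end SSA

theorem BiPath.exists_tail_eq (hso : NoSources rE) (u : LeftPath rE sE) (N : ℤ) :
    ∃ x : BiPath rE sE, x.tail N = u := by
  choose next hnext using hso
  let y (k : ℕ) : E := Nat.rec (next (sE (u.1 0))) (fun _ e => next (sE e)) k
  let x (i : ℤ) : E := if i ≤ N then u.1 (N - i).toNat else y (i - N - 1).toNat
  refine ⟨⟨x, fun i => ?_⟩, Subtype.ext <| funext fun k => ?_⟩
  · rcases lt_trichotomy i N with hi | rfl | hi
    · simp only [x, if_pos hi.le, if_pos (show i + 1 ≤ N by omega)]
      rw [show (N - i).toNat = (N - (i + 1)).toNat + 1 by omega]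
      exact u.2 _
    · simp only [x, le_refl, if_true, if_neg (show ¬ i + 1 ≤ i by omega), sub_self,
        Int.toNat_zero, show i + 1 - i - 1 = 0 by ring]
      exact (hnext _).symm
    · simp only [x, if_neg (show ¬ i ≤ N by omega), if_neg (show ¬ i + 1 ≤ N by omega)]
      rw [show (i + 1 - N - 1).toNat = (i - N - 1).toNat + 1 by omega]
      exact (hnext _).symm
  · simp only [BiPath.tail, x, if_pos (show N - k ≤ N by omega)]
    exact congrArg u.1 (by omega)

namespace SSA

variable (A : SSA V E rE sE) (T : Quot A.AsympEq → Quot A.AsympEq)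
  (hT : ∀ x : LeftPath rE sE, T (Quot.mk A.AsympEq x) = Quot.mk A.AsympEq x.shift)

/-- The map `θ` on representatives. -/
def tailClasses (x : BiPath rE sE) : {z : ℕ → Quot A.AsympEq // ∀ n, T (z (n + 1)) = z n} :=
  ⟨fun n => Quot.mk _ (x.tail (n - 1)), fun n => by
    rw [hT, x.shift_tail]
    exact congrArg (fun N => Quot.mk _ (x.tail N)) (by push_cast; ring)⟩

theorem continuous_tailClasses [TopologicalSpace E] : Continuous (A.tailClasses T hT) :=
  .subtype_mk (continuous_pi fun _ => continuous_quot_mk.comp (BiPath.continuous_tail _)) _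

theorem tailClasses_translate (x : BiPath rE sE) :
    A.tailClasses T hT x.translate = solShift T (A.tailClasses T hT x) := by
  refine Subtype.ext <| funext fun n => ?_
  cases n with
  | zero =>
    show Quot.mk _ _ = T (Quot.mk _ _)
    rw [hT, x.shift_tail, x.tail_translate]
  | succ m =>
    show Quot.mk _ _ = Quot.mk _ _
    rw [x.tail_translate]
    exact congrArg (fun N => Quot.mk _ (x.tail N)) (by push_cast; ring)

theorem tailClasses_eq_of_asympEqZ {x y : BiPath rE sE} (h : A.AsympEqZ x y) :
    A.tailClasses T hT x = A.tailClasses T hT y :=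
  Subtype.ext <| funext fun _ => Quot.sound (h.tail _)

theorem asympEqZ_of_tailClasses_eq [Finite E] {𝒩 : Set A.G} (h𝒩 : A.IsStrongCore 𝒩)
    {x y : BiPath rE sE} (h : A.tailClasses T hT x = A.tailClasses T hT y) : A.AsympEqZ x y := by
  refine A.asympEqZ_of_forall_asympEq_tail h𝒩 fun N => ?_
  have hN := A.mk_eq_mk_iff.mp (congrFun (congrArg Subtype.val h) (N + 1).toNat)
  exact hN.tail_of_le (by omega)

/-- A point of the inverse limit is realised by the intersection of the decreasing compact sets
of bi-infinite paths realising its first `n` coordinates. -/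
theorem tailClasses_surjective [Finite E] [TopologicalSpace E] [DiscreteTopology E]
    [T2Space (Quot A.AsympEq)] (hso : NoSources rE) : Function.Surjective (A.tailClasses T hT) := by
  intro z
  let K (n : ℕ) : Set (BiPath rE sE) := {x | (A.tailClasses T hT x).1 n = z.1 n}
  have hK (n : ℕ) : IsClosed (K n) :=
    isClosed_eq ((continuous_apply n).comp
      (continuous_subtype_val.comp (A.continuous_tailClasses T hT))) continuous_const
  have hanti (n : ℕ) : K (n + 1) ⊆ K n := fun x hx => by
    simp only [K, Set.mem_ofPred_eq] at hx ⊢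
    rw [← (A.tailClasses T hT x).2 n, hx, z.2 n]
  have hne (n : ℕ) : (K n).Nonempty := by
    obtain ⟨u, hu⟩ := Quot.exists_rep (z.1 n)
    obtain ⟨x, hx⟩ := BiPath.exists_tail_eq hso u (n - 1)
    exact ⟨x, show Quot.mk _ (x.tail (n - 1)) = z.1 n by rw [hx, hu]⟩
  obtain ⟨x, hx⟩ := IsCompact.nonempty_iInter_of_sequence_nonempty_isCompact_isClosed K hanti hne
    (hK 0).isCompact hK
  exact ⟨x, Subtype.ext <| funext <| Set.mem_iInter.mp hx⟩

end SSA

theorem solenoid_homeo_inverse_limit_general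
    [Fintype E] [TopologicalSpace E] [DiscreteTopology E]
    (rE sE : E → V) (A : SSA V E rE sE)
    (hA : A.Contracting) (hso : NoSources rE)
    (T : Quot A.AsympEq → Quot A.AsympEq)
    (hT : ∀ x : LeftPath rE sE,
      T (Quot.mk A.AsympEq x) = Quot.mk A.AsympEq x.shift) :
    ∃ θ : Quot A.AsympEqZ →
        {z : ℕ → Quot A.AsympEq // ∀ n, T (z (n + 1)) = z n},
      IsHomeomorph θ ∧
      -- θ([x]) = ([x(-∞,-1)], [x(-∞,0)], [x(-∞,1)], …)
      (∀ (x : BiPath rE sE) (n : ℕ),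
        (θ (Quot.mk A.AsympEqZ x)).1 n =
          Quot.mk A.AsympEq (x.tail ((n : ℤ) - 1))) ∧
      -- θ([τ(x)]) = σ̃_∞(θ([x]))
      (∀ x : BiPath rE sE,
        θ (Quot.mk A.AsympEqZ x.translate) =
          solShift T (θ (Quot.mk A.AsympEqZ x))) := by
  obtain ⟨𝒩, h𝒩⟩ := hA.exists_isStrongCore
  have := A.t2Space_quot_asympEq h𝒩
  refine ⟨Quot.lift (A.tailClasses T hT) fun _ _ => A.tailClasses_eq_of_asympEqZ T hT, ?_,
    fun _ _ => rfl, A.tailClasses_translate T hT⟩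
  refine isHomeomorph_iff_continuous_bijective.mpr
    ⟨continuous_quot_lift _ (A.continuous_tailClasses T hT), ?_, ?_⟩
  · rintro ⟨x⟩ ⟨y⟩ hxy
    exact Quot.sound (A.asympEqZ_of_tailClasses_eq T hT h𝒩 hxy)
  · exact (Quot.surjective_lift _).mpr (A.tailClasses_surjective T hT hso)

/-- the limit solenoid `S = E^ℤ/∼` is homeomorphic to the
inverse limit `lim← (J, σ̃)`, equivariantly for the translation `τ` and the
induced shift `σ̃_∞`. -/
theorem solenoid_homeo_inverse_limit
    [Fintype V] [Fintype E] [TopologicalSpace E] [DiscreteTopology E]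
    (rE sE : E → V) (A : SSA V E rE sE)
    (hA : A.Contracting) (hso : NoSources rE) (hsi : NoSinks sE)
    (T : Quot A.AsympEq → Quot A.AsympEq)
    (hT : ∀ x : LeftPath rE sE,
      T (Quot.mk A.AsympEq x) = Quot.mk A.AsympEq x.shift) :
    ∃ θ : Quot A.AsympEqZ →
        {z : ℕ → Quot A.AsympEq // ∀ n, T (z (n + 1)) = z n},
      IsHomeomorph θ ∧
      -- θ([x]) = ([x(-∞,-1)], [x(-∞,0)], [x(-∞,1)], …)
      (∀ (x : BiPath rE sE) (n : ℕ),
        (θ (Quot.mk A.AsympEqZ x)).1 n =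
          Quot.mk A.AsympEq (x.tail ((n : ℤ) - 1))) ∧
      -- θ([τ(x)]) = σ̃_∞(θ([x]))
      (∀ x : BiPath rE sE,
        θ (Quot.mk A.AsympEqZ x.translate) =
          solShift T (θ (Quot.mk A.AsympEqZ x))) :=
  solenoid_homeo_inverse_limit_general rE sE A hA hso T hT

end SSG
end

section
/- Let (G,E) be a contracting, regular self-similar groupoid action on a finite directed graph E with no sinks and no sources. Suppose x, y ∈ E^ℤ are asymptotically equivalent bi-infinite paths and that there exists n ∈ ℤ with x_m = y_m for all m ≤ n. Then x = y. -/
/-!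
Self-similar groupoid actions on finite directed graphs, following
Brownlowe–Buss–Gonçalves–Hume–Sims–Whittaker,
"KK-duality for self-similar groupoid actions on graphs".

A directed graph is given by a vertex type `V`, an edge type `E` and
range/source maps `rE sE : E → V`.  A finite path is modelled as a list of
edges together with a base vertex (its range): the list `[e₁, …, eₙ]` is the
path `e₁ … eₙ` read from left to right, so consecutive edges satisfy
`sE eᵢ = rE eᵢ₊₁`.  The groupoid of a self-similar action, its partial
multiplication, the action on finite paths and the restriction maps are
modelled as total functions whose values are only constrained (by the axioms
of the structure `SSA`) on their natural domains.
-/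

universe u

namespace SSG

variable {V E : Type u}

variable {rE sE : E → V}

/-!
Let `gₙ` witness the asymptotic equivalence. By contraction every element of the groupoid has
only finitely many restrictions, so the states `g_p|_{x_p … x_{p+a-1}}` of a fixed `g_p` range
over a finite set `R` which does not depend on `p`. Starting `|R|` steps before the point where
`x` and `y` may first differ, the pigeonhole principle gives `a < b` with equal states `h`, so
`h` fixes the cycle `μ = x_{p+a} … x_{p+b-1}` (on which `x = y`) and `h|_μ = h`. By regularity
`h` is then a unit, and since `h` maps the tail of `x` from `p + a` onwards to that of `y`, the
two tails coincide.
-/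

lemma isTrail_iff {l : List E} : IsTrail rE sE l ↔ l.IsChain (fun e f => sE e = rE f) := Iff.rfl

lemma fromV_append_iff {v : V} {l m : List E} :
    FromV rE sE v (l ++ m) ↔ FromV rE sE v l ∧ FromV rE sE (trailSrc sE v l) m := by
  rcases l.eq_nil_or_concat with rfl | ⟨l, e, rfl⟩
  · simp [FromV, isTrail_iff, trailSrc]
  · simp only [FromV, isTrail_iff, List.concat_eq_append, trailSrc,
      List.getLast?_concat, Option.elim, List.isChain_append]
    rcases l with _ | ⟨f, l⟩ <;> rcases m with _ | ⟨g, m⟩ <;> simp <;> tauto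

lemma FromV.take_drop {v : V} {l : List E} (hl : FromV rE sE v l) (k : ℕ) :
    FromV rE sE v (l.take k) ∧ FromV rE sE (trailSrc sE v (l.take k)) (l.drop k) :=
  fromV_append_iff.1 (by rwa [List.take_append_drop])

namespace RightPath

def drop (w : RightPath rE sE) (a : ℕ) : RightPath rE sE :=
  ⟨fun k => w.1 (a + k), fun k => w.2 (a + k)⟩

lemma trunc_add (w : RightPath rE sE) (a b : ℕ) :
    w.trunc (a + b) = w.trunc a ++ (w.drop a).trunc b := by
  simp [trunc, drop, List.range_add]

lemma length_trunc (w : RightPath rE sE) (n : ℕ) : (w.trunc n).length = n := by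
  simp [trunc]

lemma trunc_eq_trunc_iff {w w' : RightPath rE sE} {n : ℕ} :
    w.trunc n = w'.trunc n ↔ ∀ i < n, w.1 i = w'.1 i := by
  simp [trunc, List.map_inj_left]

lemma trailSrc_trunc (w : RightPath rE sE) (n : ℕ) :
    trailSrc sE (rE (w.1 0)) (w.trunc n) = rE (w.1 n) := by
  cases n with
  | zero => rfl
  | succ n => simp [trailSrc, trunc, List.range_succ, w.2 n]

lemma fromV_trunc (w : RightPath rE sE) (n : ℕ) : FromV rE sE (rE (w.1 0)) (w.trunc n) := by
  induction n with
  | zero => simp [trunc, FromV, isTrail_iff]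
  | succ n ih =>
    rw [trunc_add, fromV_append_iff, trailSrc_trunc]
    exact ⟨ih, by simp [trunc, drop, FromV, isTrail_iff]⟩

/-- The path `w₀ … w_{T-1} w₀ … w_{T-1} …`; it is a path because `w_T` and `w₀` have the same
range. -/
def periodic (w : RightPath rE sE) (T : ℕ) (hT : rE (w.1 T) = rE (w.1 0)) : RightPath rE sE :=
  ⟨fun k => w.1 (k % T), fun k => by
    show sE (w.1 (k % T)) = rE (w.1 ((k + 1) % T))
    rw [w.2, ← Nat.mod_add_mod]
    rcases Nat.eq_zero_or_pos T with rfl | hT0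
    · simp only [Nat.mod_zero]
    obtain hlt | hk : k % T + 1 < T ∨ k % T + 1 = T := Nat.lt_or_eq_of_le (Nat.mod_lt k hT0)
    · rw [Nat.mod_eq_of_lt hlt]
    · rw [hk, Nat.mod_self, hT]⟩

lemma drop_mul_trunc_periodic (w : RightPath rE sE) {T : ℕ} (hT : rE (w.1 T) = rE (w.1 0))
    (k : ℕ) : ((w.periodic T hT).drop (k * T)).trunc T = w.trunc T :=
  trunc_eq_trunc_iff.2 fun i hi => by
    simp [periodic, drop, Nat.mod_eq_of_lt hi]

end RightPath

namespace SSA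

variable {A : SSA V E rE sE}

lemma res_unit {v : V} {l : List E} (hl : FromV rE sE v l) :
    A.res (A.unit v) l = A.unit (trailSrc sE v l) := by
  have hdl : FromV rE sE (A.d (A.unit v)) l := by rwa [A.d_unit]
  have hd : A.d (A.res (A.unit v) l) = trailSrc sE v l := by
    rw [A.d_res _ _ hdl, A.d_unit]
  have hc : A.c (A.res (A.unit v) l) = trailSrc sE v l := by
    rw [A.c_res _ _ hdl, A.c_unit, A.act_unit v l hl]
  refine A.faithful _ _ (by rw [hd, A.d_unit]) (by rw [hc, A.c_unit]) fun m hm => ?_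
  rw [hd] at hm
  have key := A.act_append (A.unit v) l m hdl (by rwa [A.d_unit])
  rw [A.act_unit v l hl, A.act_unit v (l ++ m) (fromV_append_iff.2 ⟨hl, hm⟩)] at key
  rw [← List.append_cancel_left key, A.act_unit _ m hm]

lemma res_eq_res_take_drop {g : A.G} {l : List E} (hl : FromV rE sE (A.d g) l) (k : ℕ) :
    FromV rE sE (A.d (A.res g (l.take k))) (l.drop k) ∧
      A.res g l = A.res (A.res g (l.take k)) (l.drop k) := by
  obtain ⟨htake, hdrop⟩ := hl.take_drop k
  refine ⟨by rwa [A.d_res _ _ htake], ?_⟩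
  conv_lhs => rw [← List.take_append_drop k l]
  exact A.res_append _ _ _ htake hdrop

def restrictions (A : SSA V E rE sE) (g : A.G) : Set A.G :=
  {h | ∃ l, FromV rE sE (A.d g) l ∧ A.res g l = h}

/-- After the first edge `e` of the path we reach `f|_e`, whose restrictions of length
`N (f|_e) ≤ M` are back in `F`; this shortens the path by at least one edge. -/
lemma res_mem_biUnion_of_bound {F : Set A.G} {N : A.G → ℕ}
    (hN : ∀ g l, FromV rE sE (A.d g) l → l.length = N g → A.res g l ∈ F) {M : ℕ}
    (hM : ∀ f ∈ F, ∀ l, FromV rE sE (A.d f) l → l.length = 1 → N (A.res f l) ≤ M) :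
    ∀ f ∈ F, ∀ l, FromV rE sE (A.d f) l →
      A.res f l ∈ ⋃ f ∈ F, A.res f '' {l | l.length ≤ M + 1} := by
  intro f hf l hl
  induction hlen : l.length using Nat.strong_induction_on generalizing f l with
  | _ L ih =>
  by_cases hshort : L ≤ M + 1
  · exact Set.mem_biUnion hf ⟨l, show l.length ≤ M + 1 by omega, rfl⟩
  obtain ⟨hl₁, hres₁⟩ := res_eq_res_take_drop hl 1
  set h := A.res f (l.take 1)
  have hNh : N h ≤ M := hM f hf _ (hl.take_drop 1).1 (by simp; omega)
  obtain ⟨hl₂, hres₂⟩ := res_eq_res_take_drop hl₁ (N h)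
  have hmem : A.res h ((l.drop 1).take (N h)) ∈ F :=
    hN h _ (hl₁.take_drop (N h)).1 (by simp; omega)
  rw [hres₁, hres₂]
  exact ih _ (by simp; omega) _ hmem _ hl₂ rfl

theorem Contracting.finite_restrictions [Finite E] (hA : A.Contracting) (g : A.G) :
    (A.restrictions g).Finite := by
  obtain ⟨F, hF, hcore⟩ := hA
  choose N hN using hcore
  obtain ⟨M, hM⟩ : ∃ M, ∀ f ∈ F, ∀ l, FromV rE sE (A.d f) l → l.length = 1 →
      N (A.res f l) ≤ M := by
    obtain ⟨M, hM⟩ := ((hF.prod (List.finite_length_eq E 1)).image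
      fun p => N (A.res p.1 p.2)).bddAbove
    exact ⟨M, fun f hf l _ hl => hM ⟨(f, l), ⟨hf, hl⟩, rfl⟩⟩
  refine (((List.finite_length_le E (N g)).image (A.res g)).union
    (hF.biUnion fun f _ => (List.finite_length_le E (M + 1)).image (A.res f))).subset ?_
  rintro _ ⟨l, hl, rfl⟩
  by_cases hshort : l.length ≤ N g
  · exact Or.inl ⟨l, hshort, rfl⟩
  obtain ⟨hl', hres⟩ := res_eq_res_take_drop hl (N g)
  rw [hres]
  exact Or.inr (res_mem_biUnion_of_bound hN hM _
    (hN g _ (hl.take_drop _).1 (by simp; omega)) _ hl')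

section RightPath

variable {g : A.G} {w w' : RightPath rE sE}

lemma act_trunc_add (hg : A.d g = rE (w.1 0)) (a b : ℕ) :
    A.act g (w.trunc (a + b)) =
      A.act g (w.trunc a) ++ A.act (A.res g (w.trunc a)) ((w.drop a).trunc b) := by
  obtain ⟨ha, hb⟩ := fromV_append_iff.1 (w.trunc_add a b ▸ w.fromV_trunc (a + b))
  rw [← hg] at ha hb
  rw [w.trunc_add, A.act_append g _ _ ha hb]

lemma res_trunc_add (hg : A.d g = rE (w.1 0)) (a b : ℕ) :
    A.res g (w.trunc (a + b)) = A.res (A.res g (w.trunc a)) ((w.drop a).trunc b) := by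
  obtain ⟨ha, hb⟩ := fromV_append_iff.1 (w.trunc_add a b ▸ w.fromV_trunc (a + b))
  rw [← hg] at ha hb
  rw [w.trunc_add, A.res_append g _ _ ha hb]

lemma d_res_trunc (hg : A.d g = rE (w.1 0)) (a : ℕ) :
    A.d (A.res g (w.trunc a)) = rE ((w.drop a).1 0) := by
  rw [A.d_res _ _ (hg ▸ w.fromV_trunc a), hg, RightPath.trailSrc_trunc]
  rfl

lemma act_trunc_of_le (hg : A.d g = rE (w.1 0)) {j k : ℕ} (hjk : j ≤ k)
    (hk : A.act g (w.trunc k) = w'.trunc k) : A.act g (w.trunc j) = w'.trunc j := by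
  obtain ⟨d, rfl⟩ := Nat.exists_eq_add_of_le hjk
  rw [act_trunc_add hg, w'.trunc_add] at hk
  refine (List.append_inj hk ?_).1
  rw [A.act_length _ _ (hg ▸ w.fromV_trunc j), w.length_trunc, w'.length_trunc]

lemma act_res_trunc (hg : A.d g = rE (w.1 0)) (hact : ∀ k, A.act g (w.trunc k) = w'.trunc k)
    (a k : ℕ) : A.act (A.res g (w.trunc a)) ((w.drop a).trunc k) = (w'.drop a).trunc k := by
  have h := hact (a + k)
  rw [act_trunc_add hg, hact a, w'.trunc_add] at h
  exact List.append_cancel_left h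

end RightPath

/-- Here `μ = w₀ … w_{T-1}` is a cycle, `g` fixes `μμμ…`, so regularity makes some `g|_{μ^m}`
trivial, and `g = g|_{μ^m}`. -/
lemma eq_unit_of_res_trunc_eq_self (hreg : A.Regular) {g : A.G} {w : RightPath rE sE} {T : ℕ}
    (hT : 0 < T) (hg : A.d g = rE (w.1 0)) (hact : A.act g (w.trunc T) = w.trunc T)
    (hres : A.res g (w.trunc T) = g) : g = A.unit (A.d g) := by
  have hcyc : rE (w.1 T) = rE (w.1 0) := by
    have h := A.d_res_trunc hg T
    rw [hres, hg] at h
    exact h.symm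
  set u := w.periodic T hcyc
  have hu : A.d g = rE (u.1 0) := by
    rw [hg]
    show rE (w.1 0) = rE (w.1 (0 % T))
    rw [Nat.zero_mod]
  have hpow : ∀ k, A.act g (u.trunc (k * T)) = u.trunc (k * T) ∧
      A.res g (u.trunc (k * T)) = g := by
    intro k
    induction k with
    | zero =>
      rw [Nat.zero_mul]
      exact ⟨act_trunc_of_le (w' := w) hg (Nat.zero_le T) hact, A.res_nil g⟩
    | succ k ih =>
      rw [Nat.succ_mul, act_trunc_add hu, res_trunc_add hu, ih.1, ih.2,
        w.drop_mul_trunc_periodic hcyc, hact, hres, u.trunc_add, w.drop_mul_trunc_periodic hcyc]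
      exact ⟨rfl, rfl⟩
  have hfix : ∀ j, A.act g (u.trunc j) = u.trunc j := fun j =>
    act_trunc_of_le hu (Nat.le_mul_of_pos_right j hT) (hpow j).1
  obtain ⟨m, -, hm⟩ := hreg g u hu hfix
  obtain ⟨d, hd⟩ := Nat.exists_eq_add_of_le (Nat.le_mul_of_pos_right m hT)
  have hv : g = A.unit (rE ((u.drop m).1 d)) :=
    calc g = A.res g (u.trunc (m * T)) := (hpow m).2.symm
      _ = A.res (A.res g (u.trunc m)) ((u.drop m).trunc d) := by rw [hd, res_trunc_add hu]
      _ = A.res (A.unit (rE ((u.drop m).1 0))) ((u.drop m).trunc d) := by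
        rw [hm, hu, u.trailSrc_trunc]
        rfl
      _ = _ := by rw [A.res_unit ((u.drop m).fromV_trunc d), RightPath.trailSrc_trunc]
  rw [hv, A.d_unit]

end SSA

lemma exists_lt_le_card_map_eq {β : Type*} {s : Finset β} {f : ℕ → β}
    (hf : ∀ a ≤ s.card, f a ∈ s) : ∃ a b, a < b ∧ b ≤ s.card ∧ f a = f b := by
  obtain ⟨a, ha, b, hb, hne, heq⟩ := Finset.exists_ne_map_eq_of_card_lt_of_maps_to
    (s := Finset.range (s.card + 1)) (by simp) fun a ha =>
      hf a (by simpa [Nat.lt_succ_iff] using ha)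
  rw [Finset.mem_range] at ha hb
  rcases lt_or_gt_of_ne hne with hab | hab
  · exact ⟨a, b, hab, by omega, heq⟩
  · exact ⟨b, a, hab, by omega, heq.symm⟩

namespace BiPath

def toRightPath (x : BiPath rE sE) (p : ℤ) : RightPath rE sE :=
  ⟨fun k => x.1 (p + k), fun k => by simpa [add_assoc] using x.2 (p + k)⟩

lemma seg_eq_trunc (x : BiPath rE sE) (p : ℤ) (m : ℕ) :
    x.seg p m = (x.toRightPath p).trunc m := by
  simp only [seg, bind_pure_comp, List.map_eq_map, List.map_map]
  rfl

lemma eq_of_eq_of_le_of_forall_add {x y : BiPath rE sE} {n p : ℤ}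
    (hle : ∀ m ≤ n, x.1 m = y.1 m) (hp : p ≤ n + 1)
    (hge : ∀ k : ℕ, x.1 (p + k) = y.1 (p + k)) :
    x = y := by
  refine Subtype.ext (funext fun j => ?_)
  rcases le_or_gt j n with hj | hj
  · exact hle j hj
  · obtain ⟨k, rfl⟩ : ∃ k : ℕ, p + k = j := ⟨(j - p).toNat, by omega⟩
    exact hge k

end BiPath

theorem asympEqZ_eq_of_eventually_eq_general
    [Fintype E] (rE sE : E → V) (A : SSA V E rE sE)
    (hA : A.Contracting) (hreg : A.Regular)
    (x y : BiPath rE sE) (hxy : A.AsympEqZ x y)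
    (n : ℤ) (h : ∀ m : ℤ, m ≤ n → x.1 m = y.1 m) : x = y := by
  obtain ⟨g, hg_fin, hg_d, hg_act⟩ := hxy
  have hR : (⋃ s ∈ Set.range g, A.restrictions s).Finite :=
    hg_fin.biUnion fun s _ => hA.finite_restrictions s
  set p : ℤ := n - hR.toFinset.card
  set w := x.toRightPath p
  set w' := y.toRightPath p
  have hd : A.d (g p) = rE (w.1 0) := by simpa [w, BiPath.toRightPath] using hg_d p
  have hact : ∀ k, A.act (g p) (w.trunc k) = w'.trunc k := fun k => by
    simpa only [BiPath.seg_eq_trunc] using hg_act p k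
  obtain ⟨a, b, hab, hb, hres⟩ := exists_lt_le_card_map_eq (s := hR.toFinset)
    (f := fun a => A.res (g p) (w.trunc a)) fun a _ =>
      hR.mem_toFinset.2 (Set.mem_biUnion ⟨p, rfl⟩ ⟨_, hd ▸ w.fromV_trunc a, rfl⟩)
  have hagree : (w.drop a).trunc (b - a) = (w'.drop a).trunc (b - a) :=
    RightPath.trunc_eq_trunc_iff.2 fun i hi => h _ (by omega)
  have hunit := A.eq_unit_of_res_trunc_eq_self hreg (Nat.sub_pos_of_lt hab) (A.d_res_trunc hd a)
    (by rw [A.act_res_trunc hd hact, hagree])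
    (by rw [← A.res_trunc_add hd, Nat.add_sub_cancel' hab.le]; exact hres.symm)
  refine BiPath.eq_of_eq_of_le_of_forall_add h (p := p + a) (by omega) fun k => ?_
  have htail := A.act_res_trunc hd hact a (k + 1)
  rw [hunit, A.act_unit _ _ (A.d_res_trunc hd a ▸ (w.drop a).fromV_trunc _)] at htail
  simpa [w, w', RightPath.drop, BiPath.toRightPath, add_assoc] using
    RightPath.trunc_eq_trunc_iff.1 htail k (Nat.lt_succ_self k)

/-- asymptotically equivalent bi-infinite paths that agree on a
left tail are equal. -/
theorem asympEqZ_eq_of_eventually_eq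
    [Fintype V] [Fintype E] (rE sE : E → V) (A : SSA V E rE sE)
    (hA : A.Contracting) (hreg : A.Regular)
    (hso : NoSources rE) (hsi : NoSinks sE)
    (x y : BiPath rE sE) (hxy : A.AsympEqZ x y)
    (n : ℤ) (h : ∀ m : ℤ, m ≤ n → x.1 m = y.1 m) : x = y :=
  asympEqZ_eq_of_eventually_eq_general rE sE A hA hreg x y hxy n h

end SSG
end
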